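/- arXiv:2110.03357 — 4 statements merged into one kernel-verified Lean document; each statement's English description precedes it below -/
import Mathlib

section
/- For positive parameters with α > 1, all eigenvalues of the Jacobian at the equilibrium (1,0,0) have negative real part if and only if β < δv/(α-1). -/
open Polynomial

private lemma cp_eq (r β α δv δI : ℝ) :
    (!![-r, -β, -r; 0, -β - δv, α * δI; 0, β, -δI] : Matrix (Fin 3) (Fin 3) ℝ).charpoly
      = (X + C r) * (X^2 + C (β + δv + δI) * X + C (δI*(β+δv) - α*δI*β)) := by
  rw [Matrix.charpoly, Matrix.det_fin_three]
  simp [Matrix.charmatrix_apply, Matrix.diagonal, Matrix.vecHead, Matrix.vecTail]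
  ring

theorem jacobian_tumour_only_stability_iff
    (r β α δv δI : ℝ) (hr : 0 < r) (hβ : 0 < β) (hα : 1 < α)
    (hδv : 0 < δv) (hδI : 0 < δI) :
    let J : Matrix (Fin 3) (Fin 3) ℝ :=
      !![-r, -β, -r; 0, -β - δv, α * δI; 0, β, -δI]
    ((∀ z : ℂ, (J.charpoly.map (algebraMap ℝ ℂ)).IsRoot z → z.re < 0) ↔
      β < δv / (α - 1)) := by
  intro J
  set b : ℝ := β + δv + δI with hb
  set c : ℝ := δI*(β+δv) - α*δI*β with hc
  have hbpos : 0 < b := by positivity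
  have hroot : ∀ z : ℂ, (J.charpoly.map (algebraMap ℝ ℂ)).IsRoot z ↔
      ((z + r) * (z^2 + b*z + c) = 0) := by
    intro z
    rw [show J.charpoly = (X + C r) * (X^2 + C b * X + C c) from cp_eq r β α δv δI]
    simp [IsRoot, Polynomial.eval_map, Polynomial.eval₂_mul, Polynomial.eval₂_add,
      Polynomial.eval₂_pow]
  have hciff : (β < δv / (α - 1)) ↔ 0 < c := by
    rw [lt_div_iff₀ (by linarith)]
    constructor <;> intro h <;> nlinarith
  rw [hciff]
  constructor
  · intro h
    by_contra hcle
    push_neg at hcle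
    set s : ℝ := Real.sqrt (b^2 - 4*c) with hs
    have hs2 : s^2 = b^2 - 4*c := Real.sq_sqrt (by nlinarith)
    have hsb : b ≤ s := by
      have : Real.sqrt (b^2) ≤ s := Real.sqrt_le_sqrt (by nlinarith)
      rwa [Real.sqrt_sq hbpos.le] at this
    set x : ℝ := (-b + s)/2 with hx
    have hxnn : 0 ≤ x := by rw [hx]; linarith
    have hxr : x^2 + b*x + c = 0 := by
      rw [hx]; field_simp; nlinarith
    have := h (x : ℂ) ((hroot x).mpr ?_)
    · simp at this; linarith
    · have : ((x:ℂ)^2 + b*x + c) = ((x^2 + b*x + c : ℝ) : ℂ) := by push_cast; ring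
      rw [this, hxr]; simp
  · intro hcpos z hz
    rcases mul_eq_zero.mp ((hroot z).mp hz) with h | h
    · have : z = -r := by linear_combination h
      simp [this, hr]
    · have hre := congrArg Complex.re h
      have him := congrArg Complex.im h
      simp [Complex.add_re, Complex.add_im, Complex.mul_re, Complex.mul_im, pow_two] at hre him
      set x := z.re
      set y := z.im
      -- hre : x*x - y*y + b*x + c = 0 (some form), him : x*y + y*x + b*y = 0
      rcases eq_or_ne y 0 with hy | hy
      · by_contra hxn
        push_neg at hxn
        nlinarith [hre, hy]
      · have h2 : 2*x + b = 0 := by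
          have : y * (2*x + b) = 0 := by nlinarith [him]
          rcases mul_eq_zero.mp this with h' | h'
          · exact absurd h' hy
          · exact h'
        nlinarith
end

section
/- For α > 1 and β > δv/(α-1), the real matrix [[-r, -β, -r], [0, -β-δv, αδI], [0, β, -δI]] has a real eigenvalue that is strictly positive. -/
open Polynomial

theorem jacobian_tumour_only_unstable
    (r β α δv δI : ℝ) (hr : 0 < r) (hβ : 0 < β) (hα : 1 < α)
    (hδv : 0 < δv) (hδI : 0 < δI) (hβ' : δv / (α - 1) < β) :
    let J : Matrix (Fin 3) (Fin 3) ℝ :=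
      !![-r, -β, -r; 0, -β - δv, α * δI; 0, β, -δI]
    ∃ lam : ℝ, 0 < lam ∧ J.charpoly.IsRoot lam := by
  intro J
  set b : ℝ := β + δv + δI with hb
  set c : ℝ := (β + δv) * δI - α * β * δI with hc
  have hα1 : (0:ℝ) < α - 1 := by linarith
  have hcneg : c < 0 := by
    have : δv < β * (α - 1) := by
      rw [div_lt_iff₀ hα1] at hβ'
      linarith
    have : δv * δI < β * (α - 1) * δI := by nlinarith
    nlinarith
  have hbpos : 0 < b := by positivity
  have hdisc : 0 < b ^ 2 - 4 * c := by nlinarith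
  set s : ℝ := Real.sqrt (b ^ 2 - 4 * c) with hs
  have hs2 : s ^ 2 = b ^ 2 - 4 * c := Real.sq_sqrt hdisc.le
  have hsb : b < s := by
    nlinarith [Real.sqrt_nonneg (b ^ 2 - 4 * c), hs2]
  refine ⟨(s - b) / 2, by linarith, ?_⟩
  have hquad : ((s - b) / 2) ^ 2 + b * ((s - b) / 2) + c = 0 := by
    nlinarith [hs2]
  show Polynomial.eval ((s - b) / 2) J.charpoly = 0
  have : J.charpoly = (X + C r) * (X ^ 2 + C b * X + C c) := by
    simp only [Matrix.charpoly, Matrix.det_fin_three, Matrix.charmatrix_apply, J, hb, hc]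
    simp [Matrix.one_apply, Matrix.vecHead, Matrix.vecTail]
    ring
  rw [this]
  simp only [eval_mul, eval_add, eval_pow, eval_X, eval_C]
  rw [hquad]
  ring
end

section
/- If (U,V,I) is an equilibrium of the system U' = r*U*(1-(U+I)) - β*U*V, V' = α*δI*I - δv*V - β*(U+I)*V, I' = β*U*V - δI*I with U ≠ 0 and V ≠ 0, then U satisfies the quadratic equation A·U² + B·U + C = 0, where A = α β² r δI, B = δI β (α β δI - r δv - β δI - r β), and C = -δI² δv β. -/
theorem coexistence_quadratic
    (r β α δv δI U V I : ℝ) (hr : 0 < r) (hβ : 0 < β) (hα : 0 < α)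
    (hδv : 0 < δv) (hδI : 0 < δI)
    (hU : U ≠ 0) (hV : V ≠ 0)
    (e1 : r * U * (1 - (U + I)) - β * U * V = 0)
    (e2 : α * δI * I - δv * V - β * (U + I) * V = 0)
    (e3 : β * U * V - δI * I = 0) :
    (α * β ^ 2 * r * δI) * U ^ 2 +
      (δI * β * (α * β * δI - r * δv - β * δI - r * β)) * U +
      (-(δI ^ 2 * δv * β)) = 0 := by
  have h1 : r * (1 - (U + I)) - β * V = 0 := by
    have := mul_eq_zero.mp (by linear_combination e1 : U * (r * (1 - (U + I)) - β * V) = 0)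
    tauto
  have h2 : α * β * U - δv - β * (U + I) = 0 := by
    have := mul_eq_zero.mp
      (by linear_combination e2 + α * e3 : V * (α * β * U - δv - β * (U + I)) = 0)
    tauto
  linear_combination (-(β * δI)) * (β * e3 + β * U * h1 - (r * U + δI) * h2)
end

section
/- Consider the function β ↦ U_s(β) = ((1-α)βδI + r(β+δv) + sqrt(D(β))) / (2αβr) with D(β) = (α-1)²β²δI² + r²(β+δv)² + 2βδI r((1-α)β + (α+1)δv), where α > 1 and all parameters are positive. If (α-1)δI > r then lim_{β→∞} U_s(β) = 0, and if (α-1)δI < r then lim_{β→∞} U_s(β) = (r - (α-1)δI)/(αr). -/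
open Filter Topology

theorem coexistence_U_limit_at_high_infectivity
    (r α δv δI : ℝ) (hr : 0 < r) (hα : 1 < α)
    (hδv : 0 < δv) (hδI : 0 < δI) :
    let Us : ℝ → ℝ := fun β =>
      ((1 - α) * β * δI + r * (β + δv) +
        Real.sqrt ((α - 1) ^ 2 * β ^ 2 * δI ^ 2 + r ^ 2 * (β + δv) ^ 2 +
          2 * β * δI * r * ((1 - α) * β + (α + 1) * δv))) / (2 * α * β * r)
    ((α - 1) * δI > r → Tendsto Us atTop (𝓝 0)) ∧
    ((α - 1) * δI < r → Tendsto Us atTop (𝓝 ((r - (α - 1) * δI) / (α * r)))) := by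
  intro Us
  have hα0 : (0:ℝ) < α := by linarith
  set g : ℝ → ℝ := fun t =>
    ((1 - α) * δI + r * (1 + δv * t) +
      Real.sqrt ((α - 1) ^ 2 * δI ^ 2 + r ^ 2 * (1 + δv * t) ^ 2 +
        2 * δI * r * ((1 - α) + (α + 1) * δv * t))) / (2 * α * r) with hgdef
  have hcont : Continuous g := by
    apply Continuous.div_const
    apply Continuous.add
    · fun_prop
    · apply Real.continuous_sqrt.comp
      fun_prop
  have heq : ∀ β : ℝ, 0 < β → g β⁻¹ = Us β := by
    intro β hβ
    have hβ0 : β ≠ 0 := ne_of_gt hβ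
    set D : ℝ := (α - 1) ^ 2 * β ^ 2 * δI ^ 2 + r ^ 2 * (β + δv) ^ 2 +
          2 * β * δI * r * ((1 - α) * β + (α + 1) * δv) with hDdef
    have hD : 0 ≤ D := by
      have h1 : D = ((α - 1) * β * δI - r * (β + δv))^2 + 4 * α * r * δI * δv * β := by
        rw [hDdef]; ring
      rw [h1]
      have : 0 < 4 * α * r * δI * δv * β := by positivity
      nlinarith [sq_nonneg ((α - 1) * β * δI - r * (β + δv))]
    have hinner : (α - 1) ^ 2 * δI ^ 2 + r ^ 2 * (1 + δv * β⁻¹) ^ 2 +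
        2 * δI * r * ((1 - α) + (α + 1) * δv * β⁻¹) = D / β ^ 2 := by
      rw [hDdef]; field_simp
    have hsqrt : Real.sqrt (D / β ^ 2) = Real.sqrt D / β := by
      rw [Real.sqrt_div hD, Real.sqrt_sq hβ.le]
    show ((1 - α) * δI + r * (1 + δv * β⁻¹) +
      Real.sqrt ((α - 1) ^ 2 * δI ^ 2 + r ^ 2 * (1 + δv * β⁻¹) ^ 2 +
        2 * δI * r * ((1 - α) + (α + 1) * δv * β⁻¹))) / (2 * α * r)
      = ((1 - α) * β * δI + r * (β + δv) + Real.sqrt D) / (2 * α * β * r)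
    rw [hinner, hsqrt]
    field_simp
  have h1 : Tendsto (fun β : ℝ => g β⁻¹) atTop (𝓝 (g 0)) :=
    (hcont.tendsto 0).comp tendsto_inv_atTop_zero
  have h2 : (fun β : ℝ => g β⁻¹) =ᶠ[atTop] Us := by
    filter_upwards [eventually_gt_atTop (0:ℝ)] with β hβ
    exact heq β hβ
  have main : Tendsto Us atTop (𝓝 (g 0)) := h1.congr' h2
  have hg0 : g 0 = ((1 - α) * δI + r + |(α - 1) * δI - r|) / (2 * α * r) := by
    rw [hgdef]
    simp only
    rw [show (α - 1) ^ 2 * δI ^ 2 + r ^ 2 * (1 + δv * 0) ^ 2 +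
        2 * δI * r * ((1 - α) + (α + 1) * δv * 0) = ((α - 1) * δI - r) ^ 2 by ring,
      Real.sqrt_sq_eq_abs]
    ring_nf
  constructor
  · intro h
    have : g 0 = 0 := by
      rw [hg0, abs_of_pos (by linarith)]
      rw [show (1 - α) * δI + r + ((α - 1) * δI - r) = 0 by ring]
      simp
    exact this ▸ main
  · intro h
    have : g 0 = (r - (α - 1) * δI) / (α * r) := by
      rw [hg0, abs_of_neg (by linarith)]
      field_simp
      ring
    exact this ▸ main
end
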